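/- Let G=(V,E) be a finite simple graph and let P be a fixed simple path in G with m ≥ 2 vertices. If ≪ is a linear order on V chosen uniformly at random, then the probability that P is a bidirected path in the orientation G^≪ equals 2^{m−1}/m!. -/

import Mathlib

noncomputable def ffAux {V : Type*} (G : SimpleGraph V) (ord : V → ℕ) (t : ℕ) (v : V) : ℕ :=
  sInf {i : ℕ | 0 < i ∧ ∀ u, G.Adj u v → ∀ h : ord u < t, ffAux G ord (ord u) u ≠ i}
termination_by t
decreasing_by exact h

/-- The color that First-Fit assigns to vertex `v` when coloring `G` in the
presentation order in which `u` comes before `w` iff `ord u < ord w`. -/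
noncomputable def ffColor {V : Type*} (G : SimpleGraph V) (ord : V → ℕ) (v : V) : ℕ :=
  ffAux G ord (ord v) v

/-- The number of colors used by First-Fit on `G` in the order given by `ord`. -/
noncomputable def ffNumColors {V : Type*} [Fintype V] (G : SimpleGraph V) (ord : V → ℕ) : ℕ :=
  (Finset.univ.image (ffColor G ord)).card

/-- Expected number of colors used by First-Fit on `G` in a uniformly random order. -/
noncomputable def ffExpect {V : Type*} [Fintype V] (G : SimpleGraph V) : ℝ :=
  letI := Classical.decEq V
  (∑ e : V ≃ Fin (Fintype.card V), (ffNumColors G (fun v => (e v : ℕ)) : ℝ)) /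
    (Nat.factorial (Fintype.card V) : ℝ)

/-- Expected value of χ_FF(G,≪)/χ(G) over a uniformly random order ≪. -/
noncomputable def ffRatioExpect {V : Type*} [Fintype V] (G : SimpleGraph V) : ℝ :=
  letI := Classical.decEq V
  (∑ e : V ≃ Fin (Fintype.card V),
      (ffNumColors G (fun v => (e v : ℕ)) : ℝ) / (G.chromaticNumber.toNat : ℝ)) /
    (Nat.factorial (Fintype.card V) : ℝ)

/-- Probability, over a uniformly random presentation order of the vertex set `V`,
of the event `P` (a property of the position function of the order). -/
noncomputable def ffProb {V : Type*} [Fintype V] (P : (V → ℕ) → Prop) : ℝ :=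
  letI := Classical.decEq V
  letI := Classical.decPred (fun e : V ≃ Fin (Fintype.card V) => P (fun v => (e v : ℕ)))
  ((Finset.univ.filter (fun e : V ≃ Fin (Fintype.card V) => P (fun v => (e v : ℕ)))).card : ℝ) /
    (Nat.factorial (Fintype.card V) : ℝ)

/-- `RFF n`: the maximum over all forests on `n` vertices of the expected value of
χ_FF(T,≪)/χ(T) over a uniformly random order ≪. -/
noncomputable def RFF (n : ℕ) : ℝ :=
  sSup {x : ℝ | ∃ G : SimpleGraph (Fin n), G.IsAcyclic ∧ x = ffRatioExpect G}

/-- `l` is a bidirected (simple) path in the orientation of `G` induced by `ord`. -/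
def IsBidirected {V : Type*} (G : SimpleGraph V) (ord : V → ℕ) (l : List V) : Prop :=
  l.Nodup ∧ ∃ (l₁ l₂ : List V) (m : V), l = l₁ ++ m :: l₂ ∧
    List.Chain' (fun a b => G.Adj a b ∧ ord a < ord b) (l₁ ++ [m]) ∧
    List.Chain' (fun a b => G.Adj a b ∧ ord b < ord a) (m :: l₂)

/-- Vertices of the tree `T^r_i`: lists of pairs `(j,q)` with strictly decreasing
positive first coordinates, starting below `i`. -/
def TVert (r i : ℕ) : Type :=
  {l : List (Fin i × Fin r) //
    List.Chain (fun a b => b < a) i (l.map fun p => (p.1 : ℕ)) ∧ ∀ p ∈ l, 1 ≤ (p.1 : ℕ)}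

/-- The root of `T^r_i`. -/
def TRoot (r i : ℕ) : TVert r i := ⟨[], List.IsChain.singleton _, by simp⟩

/-- The tree `T^r_i`: a vertex is adjacent to each of its one-step extensions. -/
def TGraph (r i : ℕ) : SimpleGraph (TVert r i) :=
  SimpleGraph.fromRel (fun u v => ∃ x, v.val = u.val ++ [x])

instance (r i : ℕ) : Finite (TVert r i) := by
  have hinj : Function.Injective
      (fun v : TVert r i => (⟨v.val, by
        have h : List.IsChain (fun a b : ℕ => b < a) (i :: v.val.map fun p => (p.1 : ℕ)) :=
          v.property.1
        haveI : IsTrans ℕ (fun a b => b < a) := ⟨fun a b c h1 h2 => lt_trans h2 h1⟩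
        rw [List.isChain_iff_pairwise] at h
        have h2 := (List.pairwise_cons.mp h).2
        exact List.Nodup.of_map _ (h2.imp fun hab => (ne_of_lt hab).symm)⟩ :
        {l : List (Fin i × Fin r) // l.Nodup})) :=
    fun a b hab => Subtype.ext (Subtype.mk_eq_mk.mp hab)
  exact Finite.of_injective _ hinj

noncomputable instance (r i : ℕ) : Fintype (TVert r i) := Fintype.ofFinite _

section UniAux

open List

variable {α : Type*} {β : Type*}

/-- A list is "unimodal": it strictly increases to a peak and then strictly decreases. -/
def Uni [LT α] (l : List α) : Prop :=
  ∃ l₁ l₂ x, l = l₁ ++ x :: l₂ ∧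
    List.Chain' (· < ·) (l₁ ++ [x]) ∧ List.Chain' (fun a b => b < a) (x :: l₂)

lemma chain'_and_iff {R S : α → α → Prop} {l : List α} :
    List.Chain' (fun a b => R a b ∧ S a b) l ↔ List.Chain' R l ∧ List.Chain' S l := by
  induction l with
  | nil => exact ⟨fun _ => ⟨.nil, .nil⟩, fun _ => .nil⟩
  | cons a l ih =>
    simp only [List.Chain'] at ih ⊢
    rw [List.isChain_cons, List.isChain_cons, List.isChain_cons, ih]
    constructor
    · rintro ⟨h1, h2, h3⟩
      exact ⟨⟨fun b hb => (h1 b hb).1, h2⟩, ⟨fun b hb => (h1 b hb).2, h3⟩⟩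
    · rintro ⟨⟨h1, h2⟩, h3, h4⟩
      exact ⟨fun b hb => ⟨h1 b hb, h3 b hb⟩, h2, h4⟩

lemma uni_singleton [LT α] (x : α) : Uni [x] :=
  ⟨[], [], x, rfl, List.isChain_singleton _, List.isChain_singleton _⟩

lemma uni_map_iff [LT α] [LT β] {f : α → β} (hf : ∀ a b : α, f a < f b ↔ a < b) {l : List α} :
    Uni (l.map f) ↔ Uni l := by
  constructor
  · rintro ⟨l₁, l₂, x, heq, h1, h2⟩
    rw [List.map_eq_append_iff] at heq
    obtain ⟨m₁, m₂, rfl, rfl, heq2⟩ := heq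
    rw [List.map_eq_cons_iff] at heq2
    obtain ⟨y, m₂', rfl, rfl, rfl⟩ := heq2
    refine ⟨m₁, m₂', y, rfl, ?_, ?_⟩
    · have h1' : List.Chain' (· < ·) (List.map f (m₁ ++ [y])) := by simpa using h1
      simp only [List.Chain', List.isChain_map] at h1'
      exact h1'.imp fun {a b} h => (hf a b).1 h
    · have h2' : List.Chain' (fun a b => b < a) (List.map f (y :: m₂')) := by simpa using h2
      simp only [List.Chain', List.isChain_map] at h2'
      exact h2'.imp fun {a b} h => (hf b a).1 h
  · rintro ⟨l₁, l₂, x, rfl, h1, h2⟩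
    refine ⟨l₁.map f, l₂.map f, f x, by simp, ?_, ?_⟩
    · have : List.Chain' (· < ·) (List.map f (l₁ ++ [x])) := by
        simp only [List.Chain', List.isChain_map]; exact h1.imp fun {a b} h => (hf a b).2 h
      simpa using this
    · have : List.Chain' (fun a b => b < a) (List.map f (x :: l₂)) := by
        simp only [List.Chain', List.isChain_map]; exact h2.imp fun {a b} h => (hf b a).2 h
      simpa using this

lemma isBidirected_iff_uni {V : Type*} (G : SimpleGraph V) (ord : V → ℕ) (p : List V)
    (hnd : p.Nodup) (hch : p.Chain' G.Adj) :
    IsBidirected G ord p ↔ Uni (p.map ord) := by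
  constructor
  · rintro ⟨-, l₁, l₂, x, rfl, h1, h2⟩
    refine ⟨l₁.map ord, l₂.map ord, ord x, by simp, ?_, ?_⟩
    · have h1' : List.Chain' (fun a b => ord a < ord b) (l₁ ++ [x]) :=
        h1.imp fun {a b} h => h.2
      have := (List.isChain_map ord).mpr h1'
      simpa [List.Chain'] using this
    · have h2' : List.Chain' (fun a b => ord b < ord a) (x :: l₂) :=
        h2.imp fun {a b} h => h.2
      have := (List.isChain_map (R := fun a b : ℕ => b < a) ord).mpr h2'
      simpa [List.Chain'] using this
  · rintro ⟨a, b, x, heq, h1, h2⟩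
    rw [List.map_eq_append_iff] at heq
    obtain ⟨l₁, l₂, rfl, rfl, heq2⟩ := heq
    rw [List.map_eq_cons_iff] at heq2
    obtain ⟨v, l₂', rfl, rfl, rfl⟩ := heq2
    refine ⟨hnd, l₁, l₂', v, rfl, ?_, ?_⟩
    · have hadj : List.Chain' G.Adj (l₁ ++ [v]) := hch.prefix ⟨l₂', by simp⟩
      have hord : List.Chain' (fun a b => ord a < ord b) (l₁ ++ [v]) :=
        (List.isChain_map ord).mp (by simpa [List.Chain'] using h1)
      exact chain'_and_iff.mpr ⟨hadj, hord⟩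
    · have hadj : List.Chain' G.Adj (v :: l₂') := hch.suffix ⟨l₁, rfl⟩
      have hord : List.Chain' (fun a b => ord b < ord a) (v :: l₂') :=
        (List.isChain_map (R := fun a b : ℕ => b < a) ord).mp (by simpa [List.Chain'] using h2)
      exact chain'_and_iff.mpr ⟨hadj, hord⟩

lemma Uni.rev [LT α] {l : List α} (h : Uni l) : Uni l.reverse := by
  obtain ⟨l₁, l₂, x, rfl, h1, h2⟩ := h
  refine ⟨l₂.reverse, l₁.reverse, x, by simp, ?_, ?_⟩
  · have : l₂.reverse ++ [x] = (x :: l₂).reverse := by simp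
    rw [this]; simp only [List.Chain', List.isChain_reverse]
    exact h2.imp fun {a b} h => h
  · have : x :: l₁.reverse = (l₁ ++ [x]).reverse := by simp
    rw [this]; simp only [List.Chain', List.isChain_reverse]
    exact h1.imp fun {a b} h => h

lemma uni_reverse_iff [LT α] {l : List α} : Uni l.reverse ↔ Uni l :=
  ⟨fun h => by simpa using h.rev, Uni.rev⟩

lemma uni_cons_iff [Preorder α] {x : α} {l : List α} (hne : l ≠ [])
    (hlt : ∀ y ∈ l, x < y) : Uni (x :: l) ↔ Uni l := by
  constructor
  · rintro ⟨l₁, l₂, pk, heq, h1, h2⟩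
    cases l₁ with
    | nil =>
      simp only [List.nil_append, List.cons.injEq] at heq
      obtain ⟨rfl, rfl⟩ := heq
      cases l with
      | nil => exact absurd rfl hne
      | cons y t =>
        have hyx : y < x := (List.isChain_cons_cons.mp h2).1
        exact absurd (hlt y (List.mem_cons_self)) (lt_asymm hyx)
    | cons z t =>
      rw [List.cons_append] at heq
      injection heq with hx hl
      subst hx
      subst hl
      refine ⟨t, l₂, pk, rfl, ?_, h2⟩
      exact (List.isChain_cons.mp (by simpa [List.Chain'] using h1)).2
  · rintro ⟨l₁, l₂, pk, rfl, h1, h2⟩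
    refine ⟨x :: l₁, l₂, pk, rfl, ?_, h2⟩
    rw [List.cons_append]; simp only [List.Chain', List.isChain_cons]
    refine ⟨fun y hy => hlt y ?_, h1⟩
    have hy' := List.mem_of_mem_head? hy
    rcases List.mem_append.mp hy' with h | h
    · exact List.mem_append.mpr (Or.inl h)
    · simp only [List.mem_singleton] at h
      subst h
      exact List.mem_append.mpr (Or.inr (List.mem_cons_self))

lemma uni_concat_iff [Preorder α] {x : α} {l : List α} (hne : l ≠ [])
    (hlt : ∀ y ∈ l, x < y) : Uni (l ++ [x]) ↔ Uni l := by
  have h1 : (l ++ [x]).reverse = x :: l.reverse := by simp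
  calc Uni (l ++ [x]) ↔ Uni (l ++ [x]).reverse := uni_reverse_iff.symm
    _ ↔ Uni (x :: l.reverse) := by rw [h1]
    _ ↔ Uni l.reverse := uni_cons_iff (by simpa using hne)
        (fun y hy => hlt y (by simpa using hy))
    _ ↔ Uni l := uni_reverse_iff

lemma uni_head_or_getLast [Preorder α] {l : List α} (h : Uni l) {x : α} (hx : x ∈ l)
    (hmin : ∀ y ∈ l, y ≠ x → x < y) :
    l.head? = some x ∨ l.getLast? = some x := by
  obtain ⟨l₁, l₂, pk, rfl, h1, h2⟩ := h
  haveI : IsTrans α (fun a b : α => b < a) := ⟨fun a b c hab hbc => lt_trans hbc hab⟩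
  have hp1 : List.Pairwise (· < ·) (l₁ ++ [pk]) := List.isChain_iff_pairwise.mp h1
  have hp2 : List.Pairwise (fun a b => b < a) (pk :: l₂) := List.isChain_iff_pairwise.mp h2
  rcases List.mem_append.mp hx with hx1 | hx2
  · left
    cases l₁ with
    | nil => simp at hx1
    | cons z t =>
      rw [List.cons_append, List.head?_cons]
      rcases List.mem_cons.mp hx1 with h4 | h4
      · rw [h4]
      · exfalso
        have hp1' : List.Pairwise (· < ·) (z :: (t ++ [pk])) := by simpa using hp1
        have hzx : z < x := (List.pairwise_cons.mp hp1').1 x (List.mem_append.mpr (Or.inl h4))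
        have hxz : x < z := hmin z (by simp) hzx.ne
        exact absurd hzx (lt_asymm hxz)
  · right
    have hne : (pk :: l₂) ≠ [] := List.cons_ne_nil _ _
    have hgl : (pk :: l₂).getLast? = some x := by
      rw [List.getLast?_eq_getLast hne]
      by_cases hxz : x = (pk :: l₂).getLast hne
      · rw [hxz]
      · exfalso
        have hsplit := List.dropLast_append_getLast hne
        have hxdl : x ∈ (pk :: l₂).dropLast := by
          have h5 : x ∈ (pk :: l₂).dropLast ++ [(pk :: l₂).getLast hne] := by
            rw [hsplit]; exact hx2
          rcases List.mem_append.mp h5 with h6 | h6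
          · exact h6
          · simp only [List.mem_singleton] at h6
            exact absurd h6 hxz
        have hp2' : List.Pairwise (fun a b => b < a)
            ((pk :: l₂).dropLast ++ [(pk :: l₂).getLast hne]) := by
          rw [hsplit]; exact hp2
        rw [List.pairwise_append] at hp2'
        have hzx : (pk :: l₂).getLast hne < x :=
          hp2'.2.2 x hxdl _ (List.mem_singleton_self _)
        have hxz' : x < (pk :: l₂).getLast hne :=
          hmin _ (List.mem_append.mpr (Or.inr (List.getLast_mem hne)))
            (fun hgx => hxz hgx.symm)
        exact absurd hzx (lt_asymm hxz')
    rw [List.getLast?_append, hgl]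
    rfl

end UniAux

section PermCount

open List Equiv

/-- `π` is a unimodal permutation pattern. -/
def UniP {k : ℕ} (π : Equiv.Perm (Fin k)) : Prop :=
  Uni ((List.finRange k).map ⇑π)

/-- Number of unimodal permutations of `Fin k`. -/
noncomputable def UTcard (k : ℕ) : ℕ := Nat.card {π : Equiv.Perm (Fin k) // UniP π}

lemma finRange_reverse' (n : ℕ) :
    (List.finRange n).reverse = (List.finRange n).map Fin.rev := by
  apply List.ext_getElem
  · simp
  · intro i h1 h2
    simp only [List.getElem_reverse, List.getElem_finRange, List.getElem_map,
      List.length_finRange] at *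
    apply Fin.ext
    simp only [Fin.coe_cast, Fin.val_rev]
    omega

lemma map_perm_head {k : ℕ} (π : Equiv.Perm (Fin (k+1))) :
    ((List.finRange (k+1)).map ⇑π).head? = some (π 0) := by
  rw [List.finRange_succ, List.map_cons, List.head?_cons]

lemma map_perm_getLast {k : ℕ} (π : Equiv.Perm (Fin (k+1))) :
    ((List.finRange (k+1)).map ⇑π).getLast? = some (π (Fin.last k)) := by
  rw [← List.head?_reverse, ← List.map_reverse, finRange_reverse', List.map_map,
    List.finRange_succ, List.map_cons, List.head?_cons]
  simp [Fin.rev_zero]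

lemma uniP_cases {k : ℕ} {π : Equiv.Perm (Fin (k+2))} (h : UniP π) :
    π 0 = 0 ∨ π (Fin.last (k+1)) = 0 := by
  have h0 : (0 : Fin (k+2)) ∈ (List.finRange (k+2)).map ⇑π :=
    List.mem_map.mpr ⟨π⁻¹ 0, List.mem_finRange _, Equiv.apply_symm_apply π 0⟩
  rcases uni_head_or_getLast h h0 (fun y _ hy => Fin.pos_of_ne_zero hy) with hh | hh
  · left
    rw [map_perm_head] at hh
    exact Option.some_injective _ hh
  · right
    rw [map_perm_getLast] at hh
    exact Option.some_injective _ hh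

lemma uniP_mul_rev {n : ℕ} (π : Equiv.Perm (Fin n)) : UniP (π * Fin.revPerm) ↔ UniP π := by
  unfold UniP
  have hl : (List.finRange n).map ⇑(π * (Fin.revPerm : Equiv.Perm (Fin n))) = ((List.finRange n).map ⇑π).reverse := by
    rw [← List.map_reverse, finRange_reverse', List.map_map]
    apply List.map_congr_left
    intro a _
    rw [Equiv.Perm.mul_apply]
    congr 1
  rw [hl]
  exact uni_reverse_iff

lemma uniP_decompose {k : ℕ} (σ : Equiv.Perm (Fin (k+1))) :
    UniP (Equiv.Perm.decomposeFin.symm (0, σ)) ↔ UniP σ := by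
  have hlist : (List.finRange (k+2)).map ⇑(Equiv.Perm.decomposeFin.symm (0, σ))
      = (0 : Fin (k+2)) :: (List.finRange (k+1)).map (Fin.succ ∘ ⇑σ) := by
    rw [List.finRange_succ, List.map_cons, List.map_map]
    refine congrArg₂ List.cons (Equiv.Perm.decomposeFin_symm_apply_zero 0 σ) ?_
    apply List.map_congr_left
    intro a _
    show Equiv.Perm.decomposeFin.symm (0, σ) a.succ = (Fin.succ ∘ ⇑σ) a
    rw [Equiv.Perm.decomposeFin_symm_apply_succ]
    simp
  have hmain : Uni ((List.finRange (k+2)).map ⇑(Equiv.Perm.decomposeFin.symm (0, σ)))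
      ↔ Uni ((List.finRange (k+1)).map ⇑σ) := by
    rw [hlist]
    have hne : (List.finRange (k+1)).map (Fin.succ ∘ ⇑σ) ≠ [] := by
      simp [List.finRange_succ]
    have hlt : ∀ y ∈ (List.finRange (k+1)).map (Fin.succ ∘ ⇑σ), (0 : Fin (k+2)) < y := by
      intro y hy
      obtain ⟨z, _, rfl⟩ := List.mem_map.mp hy
      exact Fin.succ_pos _
    refine (uni_cons_iff hne hlt).trans ?_
    have h2 : (List.finRange (k+1)).map (Fin.succ ∘ ⇑σ)
        = ((List.finRange (k+1)).map ⇑σ).map Fin.succ := by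
      rw [List.map_map]
    rw [h2]
    exact uni_map_iff (fun a b => Fin.succ_lt_succ_iff)
  exact hmain

lemma decomposeFin_fst {k : ℕ} (π : Equiv.Perm (Fin (k+1))) :
    (Equiv.Perm.decomposeFin π).1 = π 0 := by
  have hπ : Equiv.Perm.decomposeFin.symm (Equiv.Perm.decomposeFin π) = π :=
    Equiv.symm_apply_apply _ _
  calc (Equiv.Perm.decomposeFin π).1
      = Equiv.Perm.decomposeFin.symm
          ((Equiv.Perm.decomposeFin π).1, (Equiv.Perm.decomposeFin π).2) 0 :=
        (Equiv.Perm.decomposeFin_symm_apply_zero _ _).symm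
    _ = Equiv.Perm.decomposeFin.symm (Equiv.Perm.decomposeFin π) 0 := rfl
    _ = π 0 := by rw [hπ]

lemma utcard_one : UTcard 1 = 1 := by
  have h : ∀ π : Equiv.Perm (Fin 1), UniP π := by
    intro π
    have hl : (List.finRange 1).map ⇑π = [π 0] := by
      rw [List.finRange_succ]
      simp
    unfold UniP
    rw [hl]
    exact uni_singleton _
  unfold UTcard
  rw [Nat.card_congr (Equiv.subtypeUnivEquiv h), Nat.card_eq_fintype_card, Fintype.card_perm]
  simp

lemma utcard_step (k : ℕ) : UTcard (k+2) = 2 * UTcard (k+1) := by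
  classical
  have hbr : ∀ {n : ℕ} (p' : Equiv.Perm (Fin n) → Prop),
      Nat.card {π : Equiv.Perm (Fin n) // p' π} = (Finset.univ.filter p').card := by
    intro n p'
    rw [Nat.card_eq_fintype_card, Fintype.card_subtype]
  unfold UTcard
  rw [hbr, hbr]
  have hsplit : (Finset.univ.filter fun π : Equiv.Perm (Fin (k+2)) => UniP π)
      = (Finset.univ.filter fun π : Equiv.Perm (Fin (k+2)) => UniP π ∧ π 0 = 0)
        ∪ (Finset.univ.filter fun π : Equiv.Perm (Fin (k+2)) =>
            UniP π ∧ π (Fin.last (k+1)) = 0) := by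
    ext π
    simp only [Finset.mem_filter, Finset.mem_univ, true_and, Finset.mem_union]
    constructor
    · intro h
      rcases uniP_cases h with h0 | h0
      · exact Or.inl ⟨h, h0⟩
      · exact Or.inr ⟨h, h0⟩
    · rintro (⟨h, -⟩ | ⟨h, -⟩) <;> exact h
  rw [hsplit, Finset.card_union_of_disjoint]
  · have hrev2 : Fin.revPerm * Fin.revPerm = (1 : Equiv.Perm (Fin (k+2))) := by
      ext x
      simp [Equiv.Perm.mul_apply]
    have hB : (Finset.univ.filter fun π : Equiv.Perm (Fin (k+2)) =>
        UniP π ∧ π (Fin.last (k+1)) = 0).card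
        = (Finset.univ.filter fun π : Equiv.Perm (Fin (k+2)) => UniP π ∧ π 0 = 0).card := by
      refine Finset.card_bij' (fun π _ => π * Fin.revPerm) (fun π _ => π * Fin.revPerm)
        ?_ ?_ ?_ ?_
      · intro π hπ
        simp only [Finset.mem_filter, Finset.mem_univ, true_and] at hπ ⊢
        refine ⟨(uniP_mul_rev π).mpr hπ.1, ?_⟩
        rw [Equiv.Perm.mul_apply]
        show π (Fin.rev 0) = 0
        rw [Fin.rev_zero]
        exact hπ.2
      · intro π hπ
        simp only [Finset.mem_filter, Finset.mem_univ, true_and] at hπ ⊢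
        refine ⟨(uniP_mul_rev π).mpr hπ.1, ?_⟩
        rw [Equiv.Perm.mul_apply]
        show π (Fin.rev (Fin.last (k+1))) = 0
        rw [Fin.rev_last]
        exact hπ.2
      · intro π _
        show π * Fin.revPerm * Fin.revPerm = π
        rw [mul_assoc, hrev2, mul_one]
      · intro π _
        show π * Fin.revPerm * Fin.revPerm = π
        rw [mul_assoc, hrev2, mul_one]
    rw [hB]
    have hA : (Finset.univ.filter fun π : Equiv.Perm (Fin (k+2)) => UniP π ∧ π 0 = 0).card
        = (Finset.univ.filter fun σ : Equiv.Perm (Fin (k+1)) => UniP σ).card := by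
      refine Finset.card_bij' (fun π _ => (Equiv.Perm.decomposeFin π).2)
        (fun σ _ => Equiv.Perm.decomposeFin.symm (0, σ)) ?_ ?_ ?_ ?_
      · intro π hπ
        simp only [Finset.mem_filter, Finset.mem_univ, true_and] at hπ ⊢
        have hπeq : Equiv.Perm.decomposeFin.symm (0, (Equiv.Perm.decomposeFin π).2) = π := by
          have h1 : ((0 : Fin (k+2)), (Equiv.Perm.decomposeFin π).2)
              = Equiv.Perm.decomposeFin π := by
            refine Prod.ext ?_ rfl
            rw [decomposeFin_fst, hπ.2]
          rw [h1, Equiv.symm_apply_apply]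
        rw [← uniP_decompose, hπeq]
        exact hπ.1
      · intro σ hσ
        simp only [Finset.mem_filter, Finset.mem_univ, true_and] at hσ ⊢
        exact ⟨(uniP_decompose σ).mpr hσ, Equiv.Perm.decomposeFin_symm_apply_zero 0 σ⟩
      · intro π hπ
        simp only [Finset.mem_filter, Finset.mem_univ, true_and] at hπ
        have h1 : ((0 : Fin (k+2)), (Equiv.Perm.decomposeFin π).2)
            = Equiv.Perm.decomposeFin π := by
          refine Prod.ext ?_ rfl
          rw [decomposeFin_fst, hπ.2]
        show Equiv.Perm.decomposeFin.symm (0, (Equiv.Perm.decomposeFin π).2) = π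
        rw [h1, Equiv.symm_apply_apply]
      · intro σ _
        show (Equiv.Perm.decomposeFin (Equiv.Perm.decomposeFin.symm (0, σ))).2 = σ
        rw [Equiv.apply_symm_apply]
    rw [hA]
    ring
  · rw [Finset.disjoint_left]
    intro π h1 h2
    simp only [Finset.mem_filter, Finset.mem_univ, true_and] at h1 h2
    have h3 := π.injective (h1.2.trans h2.2.symm)
    have h4 : (0 : Fin (k+2)) ≠ Fin.last (k+1) := by
      simp [Fin.ext_iff]
    exact h4 h3

lemma utcard_formula : ∀ k : ℕ, UTcard (k+1) = 2 ^ k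
  | 0 => utcard_one
  | (k+1) => by rw [utcard_step, utcard_formula k]; ring

end PermCount

section PathAux

variable {V : Type*} [Fintype V]

/-- The pattern permutation of the values of `e` along the path `p`. -/
noncomputable def pathPat (p : List V) (e : V ≃ Fin (Fintype.card V)) :
    Equiv.Perm (Fin p.length) :=
  (Tuple.sort fun i => e (p.get i))⁻¹

/-- Action of a permutation of path positions on orders. -/
noncomputable def pathAct (p : List V) (hnd : p.Nodup) (ρ : Equiv.Perm (Fin p.length))
    (e : V ≃ Fin (Fintype.card V)) : V ≃ Fin (Fintype.card V) :=
  (Equiv.Perm.viaEmbedding ρ ⟨p.get, List.nodup_iff_injective_get.mp hnd⟩).trans e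

lemma pathAct_get (p : List V) (hnd : p.Nodup) (ρ : Equiv.Perm (Fin p.length))
    (e : V ≃ Fin (Fintype.card V)) (i : Fin p.length) :
    pathAct p hnd ρ e (p.get i) = e (p.get (ρ i)) := by
  unfold pathAct
  rw [Equiv.trans_apply]
  congr 1
  exact Equiv.Perm.viaEmbedding_apply ρ _ i

lemma pathAct_act (p : List V) (hnd : p.Nodup) (ρ ρ' : Equiv.Perm (Fin p.length))
    (e : V ≃ Fin (Fintype.card V)) :
    pathAct p hnd ρ (pathAct p hnd ρ' e) = pathAct p hnd (ρ' * ρ) e := by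
  unfold pathAct
  rw [← Equiv.trans_assoc]
  congr 1
  rw [← Equiv.Perm.viaEmbeddingHom_apply, ← Equiv.Perm.viaEmbeddingHom_apply,
    ← Equiv.Perm.viaEmbeddingHom_apply, map_mul, Equiv.Perm.mul_def]

lemma pathAct_one (p : List V) (hnd : p.Nodup) (e : V ≃ Fin (Fintype.card V)) :
    pathAct p hnd 1 e = e := by
  unfold pathAct
  rw [← Equiv.Perm.viaEmbeddingHom_apply, map_one, Equiv.Perm.one_def, Equiv.refl_trans]

lemma pathPat_act (p : List V) (hnd : p.Nodup) (ρ : Equiv.Perm (Fin p.length))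
    (e : V ≃ Fin (Fintype.card V)) :
    pathPat p (pathAct p hnd ρ e) = pathPat p e * ρ := by
  have hg : (fun i => pathAct p hnd ρ e (p.get i)) = (fun i => e (p.get i)) ∘ ⇑ρ :=
    funext fun i => pathAct_get p hnd ρ e i
  unfold pathPat
  rw [hg]
  have hinj : Function.Injective fun i => e (p.get i) :=
    e.injective.comp (List.nodup_iff_injective_get.mp hnd)
  have h2 := Tuple.comp_perm_comp_sort_eq_comp_sort
    (f := fun i => e (p.get i)) (σ := ρ)
  have hs : Tuple.sort ((fun i => e (p.get i)) ∘ ⇑ρ)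
      = ρ⁻¹ * Tuple.sort (fun i => e (p.get i)) := by
    refine Equiv.ext fun x => ?_
    have h3 := congrFun h2 x
    have h4 := hinj h3
    rw [Equiv.Perm.mul_apply, ← h4]
    simp
  rw [hs, mul_inv_rev, inv_inv]

lemma pathPat_event {G : SimpleGraph V} {p : List V} (hnd : p.Nodup) (hch : p.Chain' G.Adj)
    (e : V ≃ Fin (Fintype.card V)) :
    IsBidirected G (fun v => ((e v : ℕ))) p ↔ UniP (pathPat p e) := by
  refine (isBidirected_iff_uni G _ p hnd hch).trans ?_
  have hmap : p.map (fun v => ((e v : ℕ)))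
      = (List.finRange p.length).map fun i => ((e (p.get i) : ℕ)) := by
    conv_lhs => rw [← List.map_get_finRange p]
    rw [List.map_map]
    rfl
  rw [hmap]
  have h1 : ((List.finRange p.length).map fun i => ((e (p.get i) : ℕ)))
      = ((List.finRange p.length).map fun i => e (p.get i)).map
          (fun x : Fin (Fintype.card V) => (x : ℕ)) := by
    rw [List.map_map]
    rfl
  rw [h1]
  refine (uni_map_iff (fun a b => Fin.val_fin_lt)).trans ?_
  have hinj : Function.Injective fun i => e (p.get i) :=
    e.injective.comp (List.nodup_iff_injective_get.mp hnd)
  have hmono : StrictMono ((fun i => e (p.get i)) ∘ ⇑(Tuple.sort fun i => e (p.get i))) :=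
    (Tuple.monotone_sort _).strictMono_of_injective (hinj.comp (Equiv.injective _))
  have h2 : (List.finRange p.length).map (fun i => e (p.get i))
      = ((List.finRange p.length).map ⇑(pathPat p e)).map
          ((fun i => e (p.get i)) ∘ ⇑(Tuple.sort fun i => e (p.get i))) := by
    rw [List.map_map]
    apply List.map_congr_left
    intro a _
    show e (p.get a) = e (p.get ((Tuple.sort fun i => e (p.get i))
      ((Tuple.sort fun i => e (p.get i))⁻¹ a)))
    rw [Equiv.Perm.inv_def, Equiv.apply_symm_apply]
  rw [h2]
  exact (uni_map_iff (fun a b => hmono.lt_iff_lt)).trans Iff.rfl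

end PathAux

/-- For a fixed simple path `p` with `m ≥ 2` vertices in a finite simple graph `G`, the
probability over a uniformly random presentation order that `p` is bidirected in the
induced orientation equals `2^(m−1)/m!`. -/
theorem prob_fixed_path_bidirected {V : Type*} [Fintype V] (G : SimpleGraph V)
    (m : ℕ) (hm : 2 ≤ m) (p : List V) (hnd : p.Nodup) (hch : p.Chain' G.Adj)
    (hlen : p.length = m) :
    ffProb (fun ord => IsBidirected G ord p) = 2 ^ (m - 1) / (Nat.factorial m : ℝ) := by
  classical
  subst hlen
  unfold ffProb
  rw [Finset.filter_congr_decidable]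
  have hfact : ((Nat.factorial (Fintype.card V) : ℝ)) ≠ 0 := by
    exact_mod_cast Nat.factorial_ne_zero _
  have hfact2 : ((Nat.factorial p.length : ℝ)) ≠ 0 := by
    exact_mod_cast Nat.factorial_ne_zero _
  rw [div_eq_div_iff hfact hfact2]
  set c := (Finset.univ.filter fun e : V ≃ Fin (Fintype.card V) => pathPat p e = 1).card
    with hc
  have hfib : ∀ π : Equiv.Perm (Fin p.length),
      (Finset.univ.filter fun e : V ≃ Fin (Fintype.card V) => pathPat p e = π).card = c := by
    intro π
    rw [hc]
    refine Finset.card_bij' (fun e _ => pathAct p hnd π⁻¹ e)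
      (fun e _ => pathAct p hnd π e) ?_ ?_ ?_ ?_
    · intro e he
      simp only [Finset.mem_filter, Finset.mem_univ, true_and] at he ⊢
      rw [pathPat_act, he, mul_inv_cancel]
    · intro e he
      simp only [Finset.mem_filter, Finset.mem_univ, true_and] at he ⊢
      rw [pathPat_act, he, one_mul]
    · intro e _
      show pathAct p hnd π (pathAct p hnd π⁻¹ e) = e
      rw [pathAct_act, inv_mul_cancel, pathAct_one]
    · intro e _
      show pathAct p hnd π⁻¹ (pathAct p hnd π e) = e
      rw [pathAct_act, mul_inv_cancel, pathAct_one]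
  have htot : Nat.factorial (Fintype.card V) = Nat.factorial p.length * c := by
    have h1 : (Finset.univ : Finset (V ≃ Fin (Fintype.card V))).card
        = Nat.factorial (Fintype.card V) := by
      rw [Finset.card_univ, Fintype.card_equiv (Fintype.equivFin V)]
    rw [← h1, Finset.card_eq_sum_card_fiberwise
      (f := pathPat p) (t := (Finset.univ : Finset (Equiv.Perm (Fin p.length))))
      (fun e _ => Finset.mem_univ _)]
    have h2 : ∀ π ∈ (Finset.univ : Finset (Equiv.Perm (Fin p.length))),
        ((Finset.univ : Finset (V ≃ Fin (Fintype.card V))).filter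
          fun e => pathPat p e = π).card = c :=
      fun π _ => hfib π
    rw [Finset.sum_congr rfl h2, Finset.sum_const, smul_eq_mul, Finset.card_univ,
      Fintype.card_perm, Fintype.card_fin]
  have hUcard : (Finset.univ.filter fun π : Equiv.Perm (Fin p.length) => UniP π).card
      = 2 ^ (p.length - 1) := by
    have h1 : (Finset.univ.filter fun π : Equiv.Perm (Fin p.length) => UniP π).card
        = UTcard p.length := by
      unfold UTcard
      rw [Nat.card_eq_fintype_card, Fintype.card_subtype]
    rw [h1]
    obtain ⟨k, hk⟩ : ∃ k, p.length = k + 1 := ⟨p.length - 1, by omega⟩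
    rw [hk, utcard_formula]
    congr 1 <;> omega
  have hS : (Finset.univ.filter fun e : V ≃ Fin (Fintype.card V) =>
      IsBidirected G (fun v => ((e v : ℕ))) p).card = 2 ^ (p.length - 1) * c := by
    rw [Finset.card_eq_sum_card_fiberwise (f := pathPat p)
      (t := Finset.univ.filter fun π : Equiv.Perm (Fin p.length) => UniP π)
      (fun e he => Finset.mem_filter.mpr ⟨Finset.mem_univ _,
        (pathPat_event hnd hch e).mp (Finset.mem_filter.mp he).2⟩)]
    have h2 : ∀ π ∈ (Finset.univ.filter fun π : Equiv.Perm (Fin p.length) => UniP π),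
        ((Finset.univ.filter fun e : V ≃ Fin (Fintype.card V) =>
          IsBidirected G (fun v => ((e v : ℕ))) p).filter
            fun e => pathPat p e = π).card = c := by
      intro π hπ
      rw [Finset.filter_filter]
      have h3 : (Finset.univ.filter fun e : V ≃ Fin (Fintype.card V) =>
          IsBidirected G (fun v => ((e v : ℕ))) p ∧ pathPat p e = π)
          = Finset.univ.filter fun e : V ≃ Fin (Fintype.card V) => pathPat p e = π := by
        ext e
        simp only [Finset.mem_filter, Finset.mem_univ, true_and]
        constructor
        · exact And.right
        · intro h
          refine ⟨(pathPat_event hnd hch e).mpr ?_, h⟩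
          rw [h]
          exact (Finset.mem_filter.mp hπ).2
      rw [h3, hfib]
    rw [Finset.sum_congr rfl h2, Finset.sum_const, smul_eq_mul, hUcard]
  show ((Finset.univ.filter fun e : V ≃ Fin (Fintype.card V) =>
      IsBidirected G (fun v => ((e v : ℕ))) p).card : ℝ) * (Nat.factorial p.length : ℝ)
    = 2 ^ (p.length - 1) * (Nat.factorial (Fintype.card V) : ℝ)
  rw [hS, htot]
  push_cast
  ring
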